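/- Let U : D × [-∞,∞] → [-∞,∞] be such that for each s, x ↦ U(s,x) is non-decreasing and right-continuous, and for each x ∈ ℝ ∪ {∞}, s ↦ U(s,x) is upper semicontinuous. Then for every upper semicontinuous function z : D → [-∞,∞], the function s ↦ U(s, z(s)) is upper semicontinuous. -/

import Mathlib

open Set Filter Topology

/-! If `z s₀ < ⊤`, right-continuity of `U s₀` at `z s₀` gives some `x > z s₀` with
`U s₀ x < y`. Near `s₀` we then have `z s < x` and `U s x < y`, so by monotonicity
`U s (z s) ≤ U s x < y`. If `z s₀ = ⊤`, monotonicity alone bounds `U s (z s)` by `U s ⊤`. -/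

variable {X β γ : Type*} [TopologicalSpace X]
  [CompleteLinearOrder β] [TopologicalSpace β] [OrderTopology β] [DenselyOrdered β]
  [LinearOrder γ] [TopologicalSpace γ] [ClosedIciTopology γ]

theorem ContinuousWithinAt.exists_gt_lt_of_Ici {f : β → γ} {a : β} {y : γ}
    (hf : ContinuousWithinAt f (Ici a) a) (ha : a < ⊤) (hy : f a < y) :
    ∃ x, a < x ∧ f x < y := by
  have : (𝓝[>] a).NeBot := nhdsGT_neBot_of_exists_gt ⟨⊤, ha⟩
  have hlt : ∀ᶠ x in 𝓝[>] a, f x < y :=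
    (hf.eventually (Iio_mem_nhds hy)).filter_mono (nhdsWithin_mono _ Ioi_subset_Ici_self)
  obtain ⟨x, hfx, hax⟩ := (hlt.and self_mem_nhdsWithin).exists
  exact ⟨x, hax, hfx⟩

theorem UpperSemicontinuousAt.comp_monotone_of_continuousWithinAt_Ici [Nontrivial β]
    {U : X → β → γ} {z : X → β} {s₀ : X} (hz : UpperSemicontinuousAt z s₀)
    (hmono : ∀ s, Monotone (U s)) (hright : ContinuousWithinAt (U s₀) (Ici (z s₀)) (z s₀))
    (husc : ∀ x ≠ ⊥, UpperSemicontinuousAt (fun s => U s x) s₀) :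
    UpperSemicontinuousAt (fun s => U s (z s)) s₀ := by
  intro y hy
  rcases (le_top : z s₀ ≤ ⊤).eq_or_lt with htop | hlt
  · have hUtop := husc ⊤ top_ne_bot y (htop ▸ hy)
    filter_upwards [hUtop] with s hs
    exact (hmono s le_top).trans_lt hs
  · obtain ⟨x, hzx, hUx⟩ := hright.exists_gt_lt_of_Ici hlt hy
    filter_upwards [hz x hzx, husc x hzx.ne_bot y hUx] with s hzs hUs
    exact (hmono s hzs.le).trans_lt hUs

theorem stmt_8_general {N : ℕ} (D : Set (EuclideanSpace ℝ (Fin N)))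
    (U : D → EReal → EReal)
    (hU1 : ∀ s : D, Monotone (U s))
    (hU2 : ∀ s : D, ∀ x : EReal, ContinuousWithinAt (U s) (Ici x) x)
    (hU3 : ∀ x : EReal, x ≠ ⊥ → UpperSemicontinuous (fun s => U s x))
    (z : D → EReal) (hz : UpperSemicontinuous z) :
    UpperSemicontinuous (fun s => U s (z s)) := fun s₀ =>
  UpperSemicontinuousAt.comp_monotone_of_continuousWithinAt_Ici (hz s₀) hU1 (hU2 s₀ (z s₀))
    fun x hx => hU3 x hx s₀

/-- Proposition 3.2(ii): if `U ∈ 𝒰(D)` (for each `s`, `x ↦ U(s,x)` is non-decreasing and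
right-continuous; for each `x ∈ ℝ ∪ {∞}`, `s ↦ U(s,x)` is upper semicontinuous), then for
every upper semicontinuous `z : D → [-∞,∞]`, the function `s ↦ U(s, z(s))` is upper
semicontinuous. -/
theorem stmt_8 {N : ℕ} (D : Set (EuclideanSpace ℝ (Fin N))) (hne : D.Nonempty)
    (hlc : LocallyCompactSpace D)
    (U : D → EReal → EReal)
    (hU1 : ∀ s : D, Monotone (U s))
    (hU2 : ∀ s : D, ∀ x : EReal, ContinuousWithinAt (U s) (Ici x) x)
    (hU3 : ∀ x : EReal, x ≠ ⊥ → UpperSemicontinuous (fun s => U s x))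
    (z : D → EReal) (hz : UpperSemicontinuous z) :
    UpperSemicontinuous (fun s => U s (z s)) :=
  stmt_8_general D U hU1 hU2 hU3 z hz
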